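/- (Fenchel conjugate of the partially linearized function.) The convex (Fenchel) conjugate of f̄_β, namely f̄_β*(t) = sup_{u ∈ dom(f̄_β)} (ut − f̄_β(u)), satisfies f̄_β*(t) = f*(t) + C'_{f,β} for t ≤ f'(1/(1+β)) and f̄_β*(t) = +∞ for t > f'(1/(1+β)), where f* is the Fenchel conjugate of f and C'_{f,β} = f(1/(1+β)) − f'(1/(1+β))·(1/(1+β)) + f'(1/(1+β)). -/

import Mathlib

/-- The partially linearized function `f̄_β` (see the paper, Section 5.1). -/
noncomputable def partiallyLinearized (f f' : ℝ → ℝ) (β : ℝ) : ℝ → ℝ := fun u =>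
  if u ≤ 1 / (1 + β) then
    f u + (-f (1 / (1 + β)) + f' (1 / (1 + β)) * (1 / (1 + β)) - f' (1 / (1 + β)))
  else f' (1 / (1 + β)) * u - f' (1 / (1 + β))

/-- The Fenchel conjugate of a function `g` defined on `(0,∞)`, with values in `EReal`:
`g*(t) = sup_{u > 0} (u·t − g(u))`. -/
noncomputable def fenchelIoi (g : ℝ → ℝ) (t : ℝ) : EReal :=
  ⨆ u : Set.Ioi (0 : ℝ), (((u : ℝ) * t - g (u : ℝ) : ℝ) : EReal)

/-!
Up to the additive constant `C'`, `f̄_β` is the function that agrees with `f` on `(0, a]`,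
`a = 1/(1+β)`, and with the tangent line of `f` at `a` beyond `a`. By convexity this function
lies below `f`, so its conjugate dominates `f*`. Conversely, for `t ≤ f'(a)` the objective
`u t − (f a + f'(a) (u − a))` is nonincreasing in `u`, so on `(a, ∞)` it never exceeds its
value at `a`; for `t > f'(a)` it grows linearly, and the conjugate is `+∞`.
-/

open Filter

noncomputable def tangentExtension (f : ℝ → ℝ) (m a : ℝ) (u : ℝ) : ℝ :=
  if u ≤ a then f u else f a + m * (u - a)

theorem fenchelIoi_sub_const (g : ℝ → ℝ) (c t : ℝ) :
    fenchelIoi (fun u => g u - c) t = fenchelIoi g t + c := by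
  have hcont : Continuous fun x : EReal => x + c :=
    continuous_iff_continuousAt.2 fun _ =>
      (EReal.continuousAt_add (Or.inr (EReal.coe_ne_bot c)) (Or.inr (EReal.coe_ne_top c))).comp
        (continuous_id.prodMk continuous_const).continuousAt
  calc fenchelIoi (fun u => g u - c) t
      = ⨆ u : Set.Ioi (0 : ℝ), (((u : ℝ) * t - g u : ℝ) : EReal) + c := by
        refine iSup_congr fun u => ?_
        rw [← EReal.coe_add]
        ring_nf
    _ = fenchelIoi g t + c :=
        ((monotone_id.add_const (c : EReal)).map_iSup_of_continuousAt hcont.continuousAt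
          (EReal.bot_add _)).symm

theorem fenchelIoi_anti {g h : ℝ → ℝ} (hgh : ∀ u, 0 < u → g u ≤ h u) (t : ℝ) :
    fenchelIoi h t ≤ fenchelIoi g t :=
  iSup_mono fun u => EReal.coe_le_coe_iff.2 (by linarith [hgh u u.2])

theorem fenchelIoi_eq_top_of_tendsto {g : ℝ → ℝ} {t : ℝ}
    (h : Tendsto (fun u => u * t - g u) atTop atTop) : fenchelIoi g t = ⊤ := by
  rw [fenchelIoi, iSup_eq_top]
  intro b hb
  obtain ⟨r, hbr, -⟩ := EReal.exists_between_coe_real hb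
  obtain ⟨u, hur, hu⟩ :=
    ((h.eventually (eventually_gt_atTop r)).and (eventually_gt_atTop 0)).exists
  exact ⟨⟨u, hu⟩, hbr.trans (EReal.coe_lt_coe_iff.2 hur)⟩

theorem ConvexOn.tangentExtension_le {f : ℝ → ℝ} {m a u : ℝ}
    (hconv : ConvexOn ℝ (Set.Ioi 0) f) (ha : 0 < a) (hderiv : HasDerivAt f m a) (hu : 0 < u) :
    tangentExtension f m a u ≤ f u := by
  unfold tangentExtension
  split_ifs with hua
  · exact le_rfl
  · have hau : a < u := not_le.1 hua
    have hslope := hconv.le_slope_of_hasDerivAt ha hu hau hderiv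
    rw [slope_def_field, le_div_iff₀ (sub_pos.2 hau)] at hslope
    linarith

theorem fenchelIoi_tangentExtension_le (f : ℝ → ℝ) {m a t : ℝ} (ha : 0 < a) (ht : t ≤ m) :
    fenchelIoi (tangentExtension f m a) t ≤ fenchelIoi f t := by
  refine iSup_le fun ⟨u, hu⟩ => ?_
  unfold tangentExtension
  split_ifs with hua
  · exact le_iSup_of_le (⟨u, hu⟩ : Set.Ioi (0 : ℝ)) le_rfl
  · refine le_iSup_of_le (⟨a, ha⟩ : Set.Ioi (0 : ℝ)) (EReal.coe_le_coe_iff.2 ?_)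
    have : (t - m) * (u - a) ≤ 0 :=
      mul_nonpos_of_nonpos_of_nonneg (sub_nonpos.2 ht) (sub_nonneg.2 (not_le.1 hua).le)
    linarith

theorem ConvexOn.fenchelIoi_tangentExtension {f : ℝ → ℝ} {m a t : ℝ}
    (hconv : ConvexOn ℝ (Set.Ioi 0) f) (ha : 0 < a) (hderiv : HasDerivAt f m a) (ht : t ≤ m) :
    fenchelIoi (tangentExtension f m a) t = fenchelIoi f t :=
  le_antisymm (fenchelIoi_tangentExtension_le f ha ht)
    (fenchelIoi_anti (fun _ hu => hconv.tangentExtension_le ha hderiv hu) t)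

theorem fenchelIoi_tangentExtension_eq_top (f : ℝ → ℝ) {m a t : ℝ} (ht : m < t) :
    fenchelIoi (tangentExtension f m a) t = ⊤ := by
  refine fenchelIoi_eq_top_of_tendsto ?_
  have hlin : Tendsto (fun u => (t - m) * u + (m * a - f a)) atTop atTop :=
    tendsto_atTop_add_const_right _ _ (tendsto_id.const_mul_atTop (sub_pos.2 ht))
  refine hlin.congr' ((eventually_gt_atTop a).mono fun u hua => ?_)
  simp only [tangentExtension, if_neg (not_le.2 hua)]
  ring

theorem partiallyLinearized_eq_tangentExtension_sub (f f' : ℝ → ℝ) (β : ℝ) :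
    partiallyLinearized f f' β = fun u =>
      tangentExtension f (f' (1 / (1 + β))) (1 / (1 + β)) u -
        (f (1 / (1 + β)) - f' (1 / (1 + β)) * (1 / (1 + β)) + f' (1 / (1 + β))) := by
  funext u
  unfold partiallyLinearized tangentExtension
  split_ifs <;> ring

theorem fenchel_partiallyLinearized_general
    (f f' : ℝ → ℝ) (β : ℝ) (hβ : 0 ≤ β)
    (hconv : ConvexOn ℝ (Set.Ioi 0) f)
    (hderiv : ∀ u ∈ Set.Ioi (0 : ℝ), HasDerivAt f (f' u) u)
    (t : ℝ) :
    (t ≤ f' (1 / (1 + β)) →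
      fenchelIoi (partiallyLinearized f f' β) t =
        fenchelIoi f t +
          ((f (1 / (1 + β)) - f' (1 / (1 + β)) * (1 / (1 + β)) + f' (1 / (1 + β)) : ℝ) :
            EReal)) ∧
    (f' (1 / (1 + β)) < t → fenchelIoi (partiallyLinearized f f' β) t = ⊤) := by
  have ha : (0 : ℝ) < 1 / (1 + β) := by positivity
  rw [partiallyLinearized_eq_tangentExtension_sub, fenchelIoi_sub_const]
  refine ⟨fun ht => ?_, fun ht => ?_⟩
  · rw [hconv.fenchelIoi_tangentExtension ha (hderiv _ ha) ht]
  · rw [fenchelIoi_tangentExtension_eq_top f ht, EReal.top_add_coe]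

/-- **Fenchel conjugate of the partially linearized function.** For `f`
convex, continuous, differentiable on `(0,∞)` with `f 1 = 0` and `β ≥ 0`, the Fenchel
conjugate of `f̄_β` equals `f* + C'_{f,β}` for `t ≤ f'(1/(1+β))` and `+∞` for
`t > f'(1/(1+β))`, where `C'_{f,β} = f(1/(1+β)) − f'(1/(1+β))·(1/(1+β)) + f'(1/(1+β))`. -/
theorem fenchel_partiallyLinearized
    (f f' : ℝ → ℝ) (β : ℝ) (hβ : 0 ≤ β)
    (hconv : ConvexOn ℝ (Set.Ioi 0) f)
    (hcont : ContinuousOn f (Set.Ioi 0))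
    (hderiv : ∀ u ∈ Set.Ioi (0 : ℝ), HasDerivAt f (f' u) u)
    (hf1 : f 1 = 0) (t : ℝ) :
    (t ≤ f' (1 / (1 + β)) →
      fenchelIoi (partiallyLinearized f f' β) t =
        fenchelIoi f t +
          ((f (1 / (1 + β)) - f' (1 / (1 + β)) * (1 / (1 + β)) + f' (1 / (1 + β)) : ℝ) :
            EReal)) ∧
    (f' (1 / (1 + β)) < t → fenchelIoi (partiallyLinearized f f' β) t = ⊤) :=
  fenchel_partiallyLinearized_general f f' β hβ hconv hderiv t
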